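/- Let R be a quasi-unital ring. For any left R-module M, the smoothening R ⊗_R M is itself a smooth left R-module: the canonical map R ⊗_R (R ⊗_R M) → R ⊗_R M is an isomorphism. -/

import Mathlib

open TensorProduct LinearMap

variable (R : Type) [NonUnitalRing R] [Module ℂ R] [SMulCommClass ℂ R R]
  [IsScalarTower ℂ R R]

/-- The bar differential `R ⊗ R ⊗ R → R ⊗ R`. -/
noncomputable def barD : (R ⊗[ℂ] (R ⊗[ℂ] R)) →ₗ[ℂ] R ⊗[ℂ] R :=
  (rTensor R (mul' ℂ R)) ∘ₗ (TensorProduct.assoc ℂ R R R).symm.toLinearMap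
    - lTensor R (mul' ℂ R)

/-- `R` is quasi-unital: the canonical map `R ⊗_R R → R` is an isomorphism. -/
def IsQuasiUnital : Prop :=
  ∃ f : ((R ⊗[ℂ] R) ⧸ LinearMap.range (barD R)) →ₗ[ℂ] R,
    f ∘ₗ (LinearMap.range (barD R)).mkQ = mul' ℂ R ∧ Function.Bijective f

variable {M : Type} [AddCommGroup M] [Module ℂ M]

/-- The bar differential `R ⊗ R ⊗ M → R ⊗ M` for a left module with bilinear
action `act`. -/
noncomputable def barDM {M : Type} [AddCommGroup M] [Module ℂ M]
    (act : R →ₗ[ℂ] M →ₗ[ℂ] M) :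
    (R ⊗[ℂ] (R ⊗[ℂ] M)) →ₗ[ℂ] R ⊗[ℂ] M :=
  (rTensor M (mul' ℂ R)) ∘ₗ (TensorProduct.assoc ℂ R R M).symm.toLinearMap
    - lTensor R (TensorProduct.lift act)

/-- The smoothening `R ⊗_R M`. -/
noncomputable abbrev Smoothening (act : R →ₗ[ℂ] M →ₗ[ℂ] M) :=
  (R ⊗[ℂ] M) ⧸ LinearMap.range (barDM R act)

/-!
Write `S = R ⊗_R M` and let `e : R ⊗_R R ≃ R` be the multiplication isomorphism. The associator
`(R ⊗_R R) × M → R ⊗_R S`, `([a ⊗ b], m) ↦ [a ⊗ [b ⊗ m]]`, is well defined because the action on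
`S` is multiplication in the first factor, and the action map `R ⊗_R S → S` sends it to
`[e q ⊗ m]`. Hence `[r ⊗ m] ↦ assoc (e⁻¹ r, m)` is a well-defined two-sided inverse of the action
map: both identities reduce to `e⁻¹ (a * b) = [a ⊗ b]`.
-/

variable {R}

section Bar

variable (act : R →ₗ[ℂ] M →ₗ[ℂ] M)

@[simp]
lemma barD_tmul (a b c : R) :
    barD R (a ⊗ₜ[ℂ] (b ⊗ₜ[ℂ] c)) = (a * b) ⊗ₜ[ℂ] c - a ⊗ₜ[ℂ] (b * c) := by
  simp [barD]

@[simp]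
lemma barDM_tmul (a b : R) (m : M) :
    barDM R act (a ⊗ₜ[ℂ] (b ⊗ₜ[ℂ] m)) = (a * b) ⊗ₜ[ℂ] m - a ⊗ₜ[ℂ] act b m := by
  simp [barDM]

lemma Smoothening.mkQ_mul_tmul (a b : R) (m : M) :
    (range (barDM R act)).mkQ ((a * b) ⊗ₜ[ℂ] m) =
      (range (barDM R act)).mkQ (a ⊗ₜ[ℂ] act b m) := by
  rw [Submodule.mkQ_apply, Submodule.mkQ_apply, Submodule.Quotient.eq]
  exact ⟨a ⊗ₜ[ℂ] (b ⊗ₜ[ℂ] m), barDM_tmul act a b m⟩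

end Bar

lemma IsQuasiUnital.exists_linearEquiv (hR : IsQuasiUnital R) :
    ∃ e : ((R ⊗[ℂ] R) ⧸ range (barD R)) ≃ₗ[ℂ] R,
      ∀ t, e ((range (barD R)).mkQ t) = mul' ℂ R t := by
  obtain ⟨f, hf, hbij⟩ := hR
  exact ⟨LinearEquiv.ofBijective f hbij, LinearMap.congr_fun hf⟩

lemma symm_mul_eq_mkQ_tmul {e : ((R ⊗[ℂ] R) ⧸ range (barD R)) ≃ₗ[ℂ] R}
    (he : ∀ t, e ((range (barD R)).mkQ t) = mul' ℂ R t) (a b : R) :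
    e.symm (a * b) = (range (barD R)).mkQ (a ⊗ₜ[ℂ] b) := by
  rw [e.symm_apply_eq, he, mul'_apply]

section Associator

variable (actM : R →ₗ[ℂ] M →ₗ[ℂ] M)
  (actS : R →ₗ[ℂ] Smoothening R actM →ₗ[ℂ] Smoothening R actM)
  (hactS : ∀ (r s : R) (m : M),
    actS r ((range (barDM R actM)).mkQ (s ⊗ₜ[ℂ] m)) =
      (range (barDM R actM)).mkQ ((r * s) ⊗ₜ[ℂ] m))

noncomputable def smootheningAssoc :
    ((R ⊗[ℂ] R) ⧸ range (barD R)) →ₗ[ℂ] M →ₗ[ℂ] Smoothening R actS :=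
  (range (barD R)).liftQ
    (curry ((range (barDM R actS)).mkQ ∘ₗ lTensor R (range (barDM R actM)).mkQ ∘ₗ
      (TensorProduct.assoc ℂ R R M).toLinearMap)) (by
    rw [range_le_ker_iff]
    ext a b c m
    simpa [← hactS, sub_eq_zero] using
      Smoothening.mkQ_mul_tmul actS a b ((range (barDM R actM)).mkQ (c ⊗ₜ[ℂ] m)))

lemma smootheningAssoc_mkQ_tmul (a b : R) (m : M) :
    smootheningAssoc actM actS hactS ((range (barD R)).mkQ (a ⊗ₜ[ℂ] b)) m =
      (range (barDM R actS)).mkQ (a ⊗ₜ[ℂ] (range (barDM R actM)).mkQ (b ⊗ₜ[ℂ] m)) :=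
  rfl

variable {e : ((R ⊗[ℂ] R) ⧸ range (barD R)) ≃ₗ[ℂ] R}
  (he : ∀ t, e ((range (barD R)).mkQ t) = mul' ℂ R t)
include he

lemma smootheningAssoc_actM (q : (R ⊗[ℂ] R) ⧸ range (barD R)) (b : R) (m : M) :
    smootheningAssoc actM actS hactS q (actM b m) =
      (range (barDM R actS)).mkQ (e q ⊗ₜ[ℂ] (range (barDM R actM)).mkQ (b ⊗ₜ[ℂ] m)) := by
  obtain ⟨t, rfl⟩ := (range (barD R)).mkQ_surjective q
  induction t using TensorProduct.induction_on with
  | zero => simp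
  | tmul c d =>
    rw [smootheningAssoc_mkQ_tmul, ← Smoothening.mkQ_mul_tmul, ← hactS,
      ← Smoothening.mkQ_mul_tmul, he, mul'_apply]
  | add x y hx hy => simp only [map_add, LinearMap.add_apply, add_tmul, hx, hy]

lemma lift_smootheningAssoc {f : Smoothening R actS →ₗ[ℂ] Smoothening R actM}
    (hf : f ∘ₗ (range (barDM R actS)).mkQ = lift actS)
    (q : (R ⊗[ℂ] R) ⧸ range (barD R)) (m : M) :
    f (smootheningAssoc actM actS hactS q m) = (range (barDM R actM)).mkQ (e q ⊗ₜ[ℂ] m) := by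
  obtain ⟨t, rfl⟩ := (range (barD R)).mkQ_surjective q
  induction t using TensorProduct.induction_on with
  | zero => simp
  | tmul c d =>
    rw [smootheningAssoc_mkQ_tmul, ← LinearMap.comp_apply, hf, lift.tmul, hactS, he, mul'_apply]
  | add x y hx hy => simp only [map_add, LinearMap.add_apply, add_tmul, hx, hy]

noncomputable def smootheningInv : Smoothening R actM →ₗ[ℂ] Smoothening R actS :=
  (range (barDM R actM)).liftQ (lift (smootheningAssoc actM actS hactS ∘ₗ e.symm.toLinearMap)) (by
    rw [range_le_ker_iff]
    ext a b m
    simpa [symm_mul_eq_mkQ_tmul he, smootheningAssoc_actM actM actS hactS he, sub_eq_zero] using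
      smootheningAssoc_mkQ_tmul actM actS hactS a b m)

lemma smootheningInv_mkQ_tmul (r : R) (m : M) :
    smootheningInv actM actS hactS he ((range (barDM R actM)).mkQ (r ⊗ₜ[ℂ] m)) =
      smootheningAssoc actM actS hactS (e.symm r) m :=
  rfl

variable {f : Smoothening R actS →ₗ[ℂ] Smoothening R actM}
  (hf : f ∘ₗ (range (barDM R actS)).mkQ = lift actS)
include hf

lemma smootheningInv_comp : smootheningInv actM actS hactS he ∘ₗ f = LinearMap.id := by
  ext r b m
  have key : smootheningInv actM actS hactS he
      (f ((range (barDM R actS)).mkQ (r ⊗ₜ[ℂ] (range (barDM R actM)).mkQ (b ⊗ₜ[ℂ] m)))) =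
        (range (barDM R actS)).mkQ (r ⊗ₜ[ℂ] (range (barDM R actM)).mkQ (b ⊗ₜ[ℂ] m)) := by
    rw [← LinearMap.comp_apply f, hf, lift.tmul, hactS, smootheningInv_mkQ_tmul,
      symm_mul_eq_mkQ_tmul he, smootheningAssoc_mkQ_tmul]
  simpa using key

lemma comp_smootheningInv : f ∘ₗ smootheningInv actM actS hactS he = LinearMap.id := by
  ext r m
  have key : f (smootheningInv actM actS hactS he ((range (barDM R actM)).mkQ (r ⊗ₜ[ℂ] m))) =
      (range (barDM R actM)).mkQ (r ⊗ₜ[ℂ] m) := by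
    rw [smootheningInv_mkQ_tmul, lift_smootheningAssoc actM actS hactS he hf, e.apply_symm_apply]
  simpa using key

end Associator

theorem smoothening_is_smooth_general
    (hR : IsQuasiUnital R)
    (actM : R →ₗ[ℂ] M →ₗ[ℂ] M)
    (actS : R →ₗ[ℂ] Smoothening R actM →ₗ[ℂ] Smoothening R actM)
    (hactS : ∀ (r s : R) (m : M),
      actS r ((LinearMap.range (barDM R actM)).mkQ (s ⊗ₜ[ℂ] m)) =
        (LinearMap.range (barDM R actM)).mkQ ((r * s) ⊗ₜ[ℂ] m)) :
    ∀ f : ((R ⊗[ℂ] Smoothening R actM) ⧸ LinearMap.range (barDM R actS)) →ₗ[ℂ]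
        Smoothening R actM,
      f ∘ₗ (LinearMap.range (barDM R actS)).mkQ = TensorProduct.lift actS →
      Function.Bijective f := by
  intro f hf
  obtain ⟨e, he⟩ := hR.exists_linearEquiv
  exact Function.bijective_iff_has_inverse.mpr ⟨smootheningInv actM actS hactS he,
    LinearMap.congr_fun (smootheningInv_comp actM actS hactS he hf),
    LinearMap.congr_fun (comp_smootheningInv actM actS hactS he hf)⟩

/-- For `R` quasi-unital and any left `R`-module `M`, the smoothening `S = R ⊗_R M`
(with the left action in the first tensor factor) is itself smooth: the canonical map
`R ⊗_R S → S` is an isomorphism. -/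
theorem smoothening_is_smooth
    (hR : IsQuasiUnital R)
    (actM : R →ₗ[ℂ] M →ₗ[ℂ] M)
    (hactM : ∀ (r s : R) (m : M), actM (r * s) m = actM r (actM s m))
    (actS : R →ₗ[ℂ] Smoothening R actM →ₗ[ℂ] Smoothening R actM)
    (hactS : ∀ (r s : R) (m : M),
      actS r ((LinearMap.range (barDM R actM)).mkQ (s ⊗ₜ[ℂ] m)) =
        (LinearMap.range (barDM R actM)).mkQ ((r * s) ⊗ₜ[ℂ] m)) :
    ∀ f : ((R ⊗[ℂ] Smoothening R actM) ⧸ LinearMap.range (barDM R actS)) →ₗ[ℂ]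
        Smoothening R actM,
      f ∘ₗ (LinearMap.range (barDM R actS)).mkQ = TensorProduct.lift actS →
      Function.Bijective f :=
  smoothening_is_smooth_general hR actM actS hactS
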